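/- With θ = m/(ε·LB) and LB ≤ **Z*** ≤ UB, the optimal quantized longest path length **Z**^θ of the quantized problem satisfies ⌊θ·LB⌋ ≤ **Z**^θ ≤ ⌊θ·UB⌋ + m. -/

import Mathlib

/-!
For a path `p` with at most `m` elements, real length `ℓ(p)` and quantized length `ℓ^θ(p)`,
rounding gives `θ ℓ(p) ≤ ℓ^θ(p) ≤ ⌊θ ℓ(p)⌋ + m`. The lower bound then passes to the optimum
directly. For the upper bound, `⌊θ ·⌋` is integer valued, so some feasible solution has
`⌊θ · (its longest real path)⌋ ≤ ⌊θ UB⌋` although the real optimum need not be attained.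
-/

open Finset

/-- `sInf (maxLengthBounds S f)` is the optimum `Z*` for `f` the real path length and `Z^θ` for `f`
the quantized one. -/
def maxLengthBounds {α : Type*} (S : Set (Finset α)) (f : α → ℝ) : Set ℝ :=
  {M : ℝ | ∃ sol ∈ S, ∀ p ∈ sol, f p ≤ M}

/-- Junk values: `sInf` of an empty or unbounded-below set of reals is `0`. -/
lemma Real.nonempty_and_bddBelow_of_sInf_pos {s : Set ℝ} (hs : 0 < sInf s) :
    s.Nonempty ∧ BddBelow s := by
  refine ⟨Set.nonempty_iff_ne_empty.2 fun h => ?_, by_contra fun h => ?_⟩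
  · rw [h, Real.sInf_empty] at hs
    exact hs.false
  · rw [Real.sInf_of_not_bddBelow h] at hs
    exact hs.false

lemma sum_le_sum_floor_add_one {ι : Type*} (p : Finset ι) (x : ι → ℝ) :
    ∑ i ∈ p, x i ≤ ((∑ i ∈ p, (⌊x i⌋ + 1) : ℤ) : ℝ) := by
  push_cast
  exact sum_le_sum fun i _ => (Int.lt_floor_add_one (x i)).le

lemma sum_floor_add_one_le {ι : Type*} {p : Finset ι} {m : ℕ} (hp : p.card ≤ m) (x : ι → ℝ)
    {M : ℝ} (hM : ∑ i ∈ p, x i ≤ M) : ∑ i ∈ p, (⌊x i⌋ + 1) ≤ ⌊M⌋ + m := by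
  have hfloor : ∑ i ∈ p, ⌊x i⌋ ≤ ⌊M⌋ := by
    rw [Int.le_floor]
    push_cast
    exact (sum_le_sum fun i _ => Int.floor_le (x i)).trans hM
  rw [sum_add_distrib, sum_const, nsmul_eq_mul, mul_one]
  have hcard : (p.card : ℤ) ≤ m := by exact_mod_cast hp
  exact add_le_add hfloor hcard

section maxLengthBounds

variable {α : Type*} {S : Set (Finset α)} {f g : α → ℝ} {θ : ℝ}

lemma mul_sInf_le_of_mem_maxLengthBounds (hθ : 0 < θ)
    (hf : BddBelow (maxLengthBounds S f)) (hfg : ∀ p, θ * f p ≤ g p)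
    {b : ℝ} (hb : b ∈ maxLengthBounds S g) : θ * sInf (maxLengthBounds S f) ≤ b := by
  obtain ⟨sol, hsol, hle⟩ := hb
  have hmem : b / θ ∈ maxLengthBounds S f :=
    ⟨sol, hsol, fun p hp => (le_div_iff₀' hθ).2 ((hfg p).trans (hle p hp))⟩
  exact (le_div_iff₀' hθ).1 (csInf_le hf hmem)

lemma mul_le_sInf_maxLengthBounds (hθ : 0 < θ) {L : ℝ}
    (hL : L ≤ sInf (maxLengthBounds S f)) (hf : BddBelow (maxLengthBounds S f))
    (hg : (maxLengthBounds S g).Nonempty) (hfg : ∀ p, θ * f p ≤ g p) :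
    θ * L ≤ sInf (maxLengthBounds S g) :=
  le_csInf hg fun _ hb =>
    (mul_le_mul_of_nonneg_left hL hθ.le).trans (mul_sInf_le_of_mem_maxLengthBounds hθ hf hfg hb)

lemma exists_mem_maxLengthBounds_floor_mul_le (hθ : 0 < θ)
    (hf : (maxLengthBounds S f).Nonempty) {U : ℝ} (hU : sInf (maxLengthBounds S f) ≤ U) :
    ∃ M ∈ maxLengthBounds S f, ⌊θ * M⌋ ≤ ⌊θ * U⌋ := by
  have hUlt : U < (⌊θ * U⌋ + 1) / θ := by
    rw [lt_div_iff₀' hθ]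
    exact Int.lt_floor_add_one _
  obtain ⟨M, hM, hMlt⟩ := exists_lt_of_csInf_lt hf (hU.trans_lt hUlt)
  refine ⟨M, hM, Int.floor_le_iff.2 ?_⟩
  exact_mod_cast (lt_div_iff₀' hθ).1 hMlt

lemma floor_mul_add_mem_maxLengthBounds (hθ : 0 < θ) (hf : (maxLengthBounds S f).Nonempty)
    {U : ℝ} (hU : sInf (maxLengthBounds S f) ≤ U) {m : ℕ}
    (hfg : ∀ sol ∈ S, ∀ p ∈ sol, ∀ M, f p ≤ M → g p ≤ ⌊θ * M⌋ + m) :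
    (⌊θ * U⌋ + m : ℝ) ∈ maxLengthBounds S g := by
  obtain ⟨M, ⟨sol, hsol, hle⟩, hMU⟩ := exists_mem_maxLengthBounds_floor_mul_le hθ hf hU
  refine ⟨sol, hsol, fun p hp => (hfg sol hsol p hp M (hle p hp)).trans ?_⟩
  gcongr

end maxLengthBounds

theorem quantized_optimum_bounds_general {ι : Type*} (ζ : ι → ℝ)
    (m : ℕ) (hm : 1 ≤ m)
    (S : Set (Finset (Finset ι)))
    (hcard : ∀ sol ∈ S, ∀ p ∈ sol, p.card ≤ m)
    (LB UB ε : ℝ) (hLB : 0 < LB) (hε : 0 < ε)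
    (θ : ℝ) (hθ : θ = m / (ε * LB))
    (hlow : LB ≤ sInf {M : ℝ | ∃ sol ∈ S, ∀ p ∈ sol, ∑ i ∈ p, ζ i ≤ M})
    (hup : sInf {M : ℝ | ∃ sol ∈ S, ∀ p ∈ sol, ∑ i ∈ p, ζ i ≤ M} ≤ UB) :
    (↑⌊θ * LB⌋ : ℝ) ≤
      sInf {M : ℝ | ∃ sol ∈ S, ∀ p ∈ sol, ((∑ i ∈ p, (⌊θ * ζ i⌋ + 1) : ℤ) : ℝ) ≤ M} ∧
    sInf {M : ℝ | ∃ sol ∈ S, ∀ p ∈ sol, ((∑ i ∈ p, (⌊θ * ζ i⌋ + 1) : ℤ) : ℝ) ≤ M} ≤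
      (↑⌊θ * UB⌋ : ℝ) + m := by
  change LB ≤ sInf (maxLengthBounds S fun p => ∑ i ∈ p, ζ i) at hlow
  change sInf (maxLengthBounds S fun p => ∑ i ∈ p, ζ i) ≤ UB at hup
  change _ ≤ sInf (maxLengthBounds S fun p => ((∑ i ∈ p, (⌊θ * ζ i⌋ + 1) : ℤ) : ℝ)) ∧
    sInf (maxLengthBounds S fun p => ((∑ i ∈ p, (⌊θ * ζ i⌋ + 1) : ℤ) : ℝ)) ≤ _
  have hθpos : 0 < θ := hθ ▸ div_pos (by exact_mod_cast hm) (mul_pos hε hLB)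
  obtain ⟨hne, hbdd⟩ := Real.nonempty_and_bddBelow_of_sInf_pos (hLB.trans_le hlow)
  have hquant : ∀ p : Finset ι, θ * ∑ i ∈ p, ζ i ≤ ((∑ i ∈ p, (⌊θ * ζ i⌋ + 1) : ℤ) : ℝ) :=
    fun p => mul_sum p ζ θ ▸ sum_le_sum_floor_add_one p _
  have hmem := floor_mul_add_mem_maxLengthBounds hθpos hne hup
    (g := fun p => ((∑ i ∈ p, (⌊θ * ζ i⌋ + 1) : ℤ) : ℝ)) fun sol hsol p hp M hM => by
      exact_mod_cast sum_floor_add_one_le (hcard sol hsol p hp) (fun i => θ * ζ i)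
        (mul_sum p ζ θ ▸ mul_le_mul_of_nonneg_left hM hθpos.le)
  refine ⟨(Int.floor_le _).trans
    (mul_le_sInf_maxLengthBounds hθpos hlow hbdd ⟨_, hmem⟩ hquant), ?_⟩
  exact csInf_le ⟨_, fun _ hb => mul_sInf_le_of_mem_maxLengthBounds hθpos hbdd hquant hb⟩ hmem

/-- With `θ = m/(ε·LB)` and `LB ≤ Z* ≤ UB`, the optimal quantized longest path
length `Z^θ` satisfies `⌊θ·LB⌋ ≤ Z^θ ≤ ⌊θ·UB⌋ + m`. Here `Z*` (resp. `Z^θ`) is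
the infimum over feasible solutions of the maximum real (resp. quantized) path
length; quantized element lengths are `⌊θζᵢ⌋ + 1`. -/
theorem quantized_optimum_bounds {ι : Type*} (ζ : ι → ℝ) (hζ : ∀ i, 0 < ζ i)
    (m : ℕ) (hm : 1 ≤ m)
    (S : Set (Finset (Finset ι))) (hS : S.Nonempty)
    (hne : ∀ sol ∈ S, sol.Nonempty)
    (hcard : ∀ sol ∈ S, ∀ p ∈ sol, p.card ≤ m)
    (LB UB ε : ℝ) (hLB : 0 < LB) (hε : 0 < ε)
    (θ : ℝ) (hθ : θ = m / (ε * LB))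
    (hlow : LB ≤ sInf {M : ℝ | ∃ sol ∈ S, ∀ p ∈ sol, ∑ i ∈ p, ζ i ≤ M})
    (hup : sInf {M : ℝ | ∃ sol ∈ S, ∀ p ∈ sol, ∑ i ∈ p, ζ i ≤ M} ≤ UB) :
    (↑⌊θ * LB⌋ : ℝ) ≤
      sInf {M : ℝ | ∃ sol ∈ S, ∀ p ∈ sol, ((∑ i ∈ p, (⌊θ * ζ i⌋ + 1) : ℤ) : ℝ) ≤ M} ∧
    sInf {M : ℝ | ∃ sol ∈ S, ∀ p ∈ sol, ((∑ i ∈ p, (⌊θ * ζ i⌋ + 1) : ℤ) : ℝ) ≤ M} ≤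
      (↑⌊θ * UB⌋ : ℝ) + m :=
  quantized_optimum_bounds_general ζ m hm S hcard LB UB ε hLB hε θ hθ hlow hup
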